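/- The representation of the 4-star quiver (central node with arrows to four outer nodes) with central space K^{2m}, outer spaces K^m, and maps [I 0], [0 I], [I I], and [I J_m(0)] (where J_m(0) is the nilpotent m×m Jordan block) is indecomposable for every m ≥ 1. -/

import Mathlib

/-!
A splitting of the representation gives an idempotent endomorphism `P` of the central space
`V × V` (the projection onto `Uc` along `Wc`) that preserves the kernels of the four maps.
Invariance of `ker [I 0]` and `ker [0 I]` makes `P` block diagonal, invariance of `ker [I I]`
makes the two blocks equal to one idempotent `A`, and invariance of `ker [I J]` makes `A` commute
with `J`. Then the range and the kernel of `A` are complementary `J`-invariant subspaces; since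
`J` is nilpotent with a kernel of dimension one, each of them contains `ker J` unless it is zero.
Hence `A = 0` or `A = 1`, and as the four outer maps are surjective, the outer subspaces
follow the central one.
-/

open LinearMap

namespace Submodule

variable {R E F : Type*} [Ring R] [AddCommGroup E] [Module R E] [AddCommGroup F] [Module R F]

theorem map_projection_of_map_le {Uc Wc : Submodule R E} (hc : IsCompl Uc Wc)
    {U W : Submodule R F} (h : IsCompl U W) {f : E →ₗ[R] F}
    (hU : Uc.map f ≤ U) (hW : Wc.map f ≤ W) (v : E) :
    f (Uc.projection Wc hc v) = U.projection W h (f v) := by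
  conv_rhs => rw [← projection_add_projection_eq_self hc v]
  rw [map_add, map_add,
    projection_apply_of_mem_left h (hU (mem_map_of_mem (projection_apply_mem hc v))),
    projection_apply_of_mem_right h (hW (mem_map_of_mem (projection_apply_mem hc.symm v))),
    add_zero]

theorem ker_mem_invtSubmodule_projection {Uc Wc : Submodule R E} (hc : IsCompl Uc Wc)
    {U W : Submodule R F} (h : IsCompl U W) {f : E →ₗ[R] F}
    (hU : Uc.map f ≤ U) (hW : Wc.map f ≤ W) :
    ker f ∈ Module.End.invtSubmodule (Uc.projection Wc hc) :=
  (Module.End.mem_invtSubmodule_iff_forall_mem_of_mem _).mpr fun v hv => by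
    rw [mem_ker] at hv ⊢
    rw [map_projection_of_map_le hc h hU hW, hv, map_zero]

theorem eq_bot_of_isCompl_of_map_le {Uc Wc : Submodule R E} (hc : IsCompl Uc Wc)
    (hUc : Uc = ⊥) {U W : Submodule R F} (h : IsCompl U W) {f : E →ₗ[R] F}
    (hf : Function.Surjective f) (hW : Wc.map f ≤ W) : U = ⊥ := by
  rw [hUc] at hc
  rw [eq_top_of_bot_isCompl hc, map_top, range_eq_top.mpr hf, top_le_iff] at hW
  exact eq_bot_of_isCompl_top (hW ▸ h)

end Submodule

section ProdMap

variable {R V : Type*} [Ring R] [AddCommGroup V] [Module R V]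

theorem LinearMap.eq_prodMap_of_ker_fst_ker_snd_mem_invtSubmodule {P : Module.End R (V × V)}
    (h₁ : ker (fst R V V) ∈ P.invtSubmodule) (h₂ : ker (snd R V V) ∈ P.invtSubmodule) :
    P = (fst R V V ∘ₗ P ∘ₗ inl R V V).prodMap (snd R V V ∘ₗ P ∘ₗ inr R V V) := by
  refine prod_ext (LinearMap.ext fun x => Prod.ext rfl ?_)
    (LinearMap.ext fun y => Prod.ext ?_ rfl)
  · simpa [Prod.mk_zero_zero] using h₂ (show (x, (0 : V)) ∈ ker (snd R V V) from rfl)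
  · simpa [Prod.mk_zero_zero] using h₁ (show ((0 : V), y) ∈ ker (fst R V V) from rfl)

theorem LinearMap.comp_eq_comp_of_ker_mem_invtSubmodule_prodMap {A B T : Module.End R V}
    (h : ker (fst R V V + T ∘ₗ snd R V V) ∈ Module.End.invtSubmodule (A.prodMap B)) :
    A ∘ₗ T = T ∘ₗ B := by
  ext y
  have hy := h (show (-T y, y) ∈ ker (fst R V V + T ∘ₗ snd R V V) by simp)
  simpa [neg_add_eq_zero] using hy

theorem IsIdempotentElem.of_prodMap_left {A B : Module.End R V}
    (h : IsIdempotentElem (A.prodMap B)) : IsIdempotentElem A :=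
  LinearMap.ext fun x => congrArg Prod.fst (LinearMap.congr_fun h (x, 0))

end ProdMap

section Nilpotent

variable {K V : Type*} [Field K] [AddCommGroup V] [Module K V]

theorem Module.End.exists_ne_zero_mem_ker_of_mem_invtSubmodule {J : Module.End K V}
    (hJ : IsNilpotent J) {W : Submodule K V} (hW : W ∈ J.invtSubmodule) (hW₀ : W ≠ ⊥) :
    ∃ u ∈ W, u ≠ 0 ∧ J u = 0 := by
  suffices ∀ (n : ℕ), ∀ w ∈ W, w ≠ 0 → (J ^ n) w = 0 → ∃ u ∈ W, u ≠ 0 ∧ J u = 0 by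
    obtain ⟨n, hn⟩ := hJ
    obtain ⟨w, hw, hw₀⟩ := W.ne_bot_iff.mp hW₀
    exact this n w hw hw₀ (by rw [hn, LinearMap.zero_apply])
  intro n
  induction n with
  | zero => exact fun w _ hw₀ hw => absurd hw hw₀
  | succ n ih =>
    intro w hw hw₀ hJw
    by_cases hw₁ : J w = 0
    · exact ⟨w, hw, hw₀, hw₁⟩
    · exact ih (J w) (hW hw) hw₁ (by rwa [← Module.End.mul_apply, ← pow_succ])

theorem Module.End.ker_le_of_mem_invtSubmodule {J : Module.End K V} (hJ : IsNilpotent J)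
    {e₀ : V} (hker : ker J ≤ K ∙ e₀) {W : Submodule K V} (hW : W ∈ J.invtSubmodule)
    (hW₀ : W ≠ ⊥) : ker J ≤ W := by
  obtain ⟨u, huW, hu₀, hJu⟩ := exists_ne_zero_mem_ker_of_mem_invtSubmodule hJ hW hW₀
  obtain ⟨a, rfl⟩ := Submodule.mem_span_singleton.mp (hker hJu)
  have ha : a ≠ 0 := by rintro rfl; exact hu₀ (zero_smul K e₀)
  refine hker.trans ((Submodule.span_singleton_le_iff_mem _ _).mpr ?_)
  simpa [smul_smul, ha] using W.smul_mem a⁻¹ huW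

theorem IsIdempotentElem.eq_zero_or_eq_one_of_commute {A J : Module.End K V}
    (hA : IsIdempotentElem A) (hAJ : Commute A J) (hJ : IsNilpotent J) {e₀ : V}
    (hker : ker J ≤ K ∙ e₀) : A = 0 ∨ A = 1 := by
  obtain ⟨hrange, hkerA⟩ := (LinearMap.IsIdempotentElem.commute_iff hA).mp hAJ
  by_contra! hA₀₁
  have hrange₀ : range A ≠ ⊥ := by rw [Ne, range_eq_bot]; exact hA₀₁.1
  have hkerA₀ : ker A ≠ ⊥ := by
    rw [Ne, LinearMap.IsIdempotentElem.ker_eq_range_one_sub hA, range_eq_bot, sub_eq_zero]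
    exact hA₀₁.2.symm
  have hJ₀ : ker J = ⊥ := by
    rw [← le_bot_iff, ← hA.isCompl.inf_eq_bot]
    exact le_inf (Module.End.ker_le_of_mem_invtSubmodule hJ hker hrange hrange₀)
      (Module.End.ker_le_of_mem_invtSubmodule hJ hker hkerA hkerA₀)
  obtain ⟨u, -, hu₀, hJu⟩ := Module.End.exists_ne_zero_mem_ker_of_mem_invtSubmodule hJ
    (Module.End.invtSubmodule.top_mem J) (ne_bot_of_le_ne_bot hrange₀ le_top)
  exact hu₀ ((Submodule.mem_bot K).mp (hJ₀ ▸ hJu))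

theorem IsIdempotentElem.eq_zero_or_eq_one_of_ker_mem_invtSubmodule {J : Module.End K V}
    (hJ : IsNilpotent J) {e₀ : V} (hker : ker J ≤ K ∙ e₀) {P : Module.End K (V × V)}
    (hP : IsIdempotentElem P)
    (h₁ : ker (fst K V V) ∈ P.invtSubmodule) (h₂ : ker (snd K V V) ∈ P.invtSubmodule)
    (h₃ : ker (fst K V V + snd K V V) ∈ P.invtSubmodule)
    (h₄ : ker (fst K V V + J ∘ₗ snd K V V) ∈ P.invtSubmodule) : P = 0 ∨ P = 1 := by
  obtain ⟨A, B, rfl⟩ : ∃ A B : Module.End K V, P = A.prodMap B :=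
    ⟨_, _, eq_prodMap_of_ker_fst_ker_snd_mem_invtSubmodule h₁ h₂⟩
  obtain rfl : A = B := by
    simpa using comp_eq_comp_of_ker_mem_invtSubmodule_prodMap (T := LinearMap.id) h₃
  have hAJ : Commute A J := comp_eq_comp_of_ker_mem_invtSubmodule_prodMap h₄
  rcases hP.of_prodMap_left.eq_zero_or_eq_one_of_commute hAJ hJ hker with rfl | rfl
  · exact Or.inl prodMap_zero
  · exact Or.inr prodMap_one

end Nilpotent

section JordanBlock

variable (K : Type*) [Field K] (m : ℕ)

def nilpotentJordanBlock : Module.End K (Fin m → K) :=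
  Matrix.mulVecLin (Matrix.of fun i j : Fin m => if (j : ℕ) = (i : ℕ) + 1 then (1 : K) else 0)

variable {K m}

theorem nilpotentJordanBlock_apply (z : Fin m → K) (i : Fin m) :
    nilpotentJordanBlock K m z i = if h : (i : ℕ) + 1 < m then z ⟨i + 1, h⟩ else 0 := by
  simp only [nilpotentJordanBlock, Matrix.mulVecLin_apply, Matrix.mulVec, dotProduct,
    Matrix.of_apply, ite_mul, one_mul, zero_mul]
  split_ifs with h
  · simp_rw [show ∀ j : Fin m, (j : ℕ) = i + 1 ↔ j = ⟨i + 1, h⟩ from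
      fun j => by rw [Fin.ext_iff], Finset.sum_ite_eq', Finset.mem_univ, if_true]
  · exact Finset.sum_eq_zero fun j _ => if_neg fun hj : (j : ℕ) = i + 1 => h (hj ▸ j.isLt)

theorem nilpotentJordanBlock_pow_apply_eq_zero (k : ℕ) (z : Fin m → K) {i : Fin m}
    (hi : m ≤ i + k) : (nilpotentJordanBlock K m ^ k) z i = 0 := by
  induction k generalizing i with
  | zero => exact absurd i.isLt (by omega)
  | succ k ih =>
    rw [pow_succ', Module.End.mul_apply, nilpotentJordanBlock_apply]
    split_ifs with h
    · exact ih (by simp only; omega)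
    · rfl

theorem isNilpotent_nilpotentJordanBlock : IsNilpotent (nilpotentJordanBlock K m) :=
  ⟨m, LinearMap.ext fun z => funext fun i =>
    nilpotentJordanBlock_pow_apply_eq_zero m z (Nat.le_add_left m i)⟩

theorem ker_nilpotentJordanBlock_le (hm : 1 ≤ m) :
    ker (nilpotentJordanBlock K m) ≤ K ∙ Pi.single ⟨0, hm⟩ 1 := by
  intro z hz
  refine Submodule.mem_span_singleton.mpr ⟨z ⟨0, hm⟩, funext fun j => ?_⟩
  rcases j with ⟨_ | j, hj⟩
  · simp
  · have := congrFun (mem_ker.mp hz) ⟨j, by omega⟩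
    rw [nilpotentJordanBlock_apply, dif_pos hj] at this
    simp [this]

end JordanBlock

theorem stmt_18 (K : Type*) [Field K] (m : ℕ) (hm : 1 ≤ m)
    (J : (Fin m → K) →ₗ[K] (Fin m → K))
    (hJ : J = Matrix.mulVecLin
      (Matrix.of fun i j : Fin m => if (j : ℕ) = (i : ℕ) + 1 then (1 : K) else 0))
    (f1 f2 f3 f4 : ((Fin m → K) × (Fin m → K)) →ₗ[K] (Fin m → K))
    (h1 : f1 = LinearMap.fst K (Fin m → K) (Fin m → K))
    (h2 : f2 = LinearMap.snd K (Fin m → K) (Fin m → K))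
    (h3 : f3 = LinearMap.fst K (Fin m → K) (Fin m → K) +
      LinearMap.snd K (Fin m → K) (Fin m → K))
    (h4 : f4 = LinearMap.fst K (Fin m → K) (Fin m → K) +
      J ∘ₗ LinearMap.snd K (Fin m → K) (Fin m → K)) :
    ∀ (Uc Wc : Submodule K ((Fin m → K) × (Fin m → K)))
      (U1 W1 U2 W2 U3 W3 U4 W4 : Submodule K (Fin m → K)),
      IsCompl Uc Wc → IsCompl U1 W1 → IsCompl U2 W2 → IsCompl U3 W3 →
      IsCompl U4 W4 →
      Uc.map f1 ≤ U1 → Wc.map f1 ≤ W1 →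
      Uc.map f2 ≤ U2 → Wc.map f2 ≤ W2 →
      Uc.map f3 ≤ U3 → Wc.map f3 ≤ W3 →
      Uc.map f4 ≤ U4 → Wc.map f4 ≤ W4 →
      (Uc = ⊥ ∧ U1 = ⊥ ∧ U2 = ⊥ ∧ U3 = ⊥ ∧ U4 = ⊥) ∨
      (Wc = ⊥ ∧ W1 = ⊥ ∧ W2 = ⊥ ∧ W3 = ⊥ ∧ W4 = ⊥) := by
  intro Uc Wc U1 W1 U2 W2 U3 W3 U4 W4 hc hc1 hc2 hc3 hc4 hu1 hw1 hu2 hw2 hu3 hw3 hu4 hw4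
  obtain rfl : J = nilpotentJordanBlock K m := hJ
  subst h1 h2 h3 h4
  have hsurj₃ : Function.Surjective
      (fst K (Fin m → K) (Fin m → K) + snd K (Fin m → K) (Fin m → K)) :=
    fun x => ⟨(x, 0), by simp⟩
  have hsurj₄ : Function.Surjective (fst K (Fin m → K) (Fin m → K) +
      nilpotentJordanBlock K m ∘ₗ snd K (Fin m → K) (Fin m → K)) :=
    fun x => ⟨(x, 0), by simp⟩
  rcases (Submodule.isIdempotentElem_projection hc).eq_zero_or_eq_one_of_ker_mem_invtSubmodule
      (J := nilpotentJordanBlock K m) isNilpotent_nilpotentJordanBlock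
      (ker_nilpotentJordanBlock_le hm)
      (Submodule.ker_mem_invtSubmodule_projection hc hc1 hu1 hw1)
      (Submodule.ker_mem_invtSubmodule_projection hc hc2 hu2 hw2)
      (Submodule.ker_mem_invtSubmodule_projection hc hc3 hu3 hw3)
      (Submodule.ker_mem_invtSubmodule_projection hc hc4 hu4 hw4) with hP | hP
  · have hUc : Uc = ⊥ := by rw [← Submodule.range_projection hc, hP, range_zero]
    exact Or.inl ⟨hUc,
      Submodule.eq_bot_of_isCompl_of_map_le hc hUc hc1 fst_surjective hw1,
      Submodule.eq_bot_of_isCompl_of_map_le hc hUc hc2 snd_surjective hw2,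
      Submodule.eq_bot_of_isCompl_of_map_le hc hUc hc3 hsurj₃ hw3,
      Submodule.eq_bot_of_isCompl_of_map_le hc hUc hc4 hsurj₄ hw4⟩
  · have hWc : Wc = ⊥ := by
      rw [← Submodule.ker_projection hc, hP, Module.End.one_eq_id, ker_id]
    exact Or.inr ⟨hWc,
      Submodule.eq_bot_of_isCompl_of_map_le hc.symm hWc hc1.symm fst_surjective hu1,
      Submodule.eq_bot_of_isCompl_of_map_le hc.symm hWc hc2.symm snd_surjective hu2,
      Submodule.eq_bot_of_isCompl_of_map_le hc.symm hWc hc3.symm hsurj₃ hu3,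
      Submodule.eq_bot_of_isCompl_of_map_le hc.symm hWc hc4.symm hsurj₄ hu4⟩
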